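/- arXiv:0712.1740 — 2 statements merged into one kernel-verified Lean document; each statement's English description precedes it below -/
import Mathlib

section
/- Let H be a Hermitian matrix on a finite-dimensional Hilbert space ⊕_{x∈Q} ℋ (Q finite, dim ℋ < ∞) decomposed as a block matrix, and let Q = Q₁ ∪ Q₂ be a disjoint partition. Let H' be the block-diagonal matrix obtained by setting all blocks p_y H i_x with x ∈ Q₁, y ∈ Q₂ or x ∈ Q₂, y ∈ Q₁ to zero. If H has finite range R (p_y H i_x = 0 whenever dist(x,y) > R), then rank(H - H') ≤ 2 · dim(ℋ) · #{x ∈ Q₁ : dist(x, Q₂) ≤ R} + 2 · dim(ℋ) · #{x ∈ Q₂ : dist(x, Q₁) ≤ R}. -/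
/-! A nonzero entry `(H - H') (y, a) (x, b)` couples sites `x`, `y` on opposite sides of the
partition with `dist x y ≤ R`, so `y` lies in the `R`-boundary of its side. Hence every row of
`H - H'` indexed by a site off the boundary vanishes, and the rank is at most the number of
remaining rows, `n` times the size of the boundary. -/

open Finset

namespace Matrix

variable {m n K : Type*} [Fintype m] [Fintype n] [Field K]

theorem rank_le_card_of_row_eq_zero (M : Matrix m n K) (s : Finset m)
    (hs : ∀ i ∉ s, M i = 0) : M.rank ≤ #s := by
  classical
  have hspan : Submodule.span K (Set.range M.row) ≤ Submodule.span K ↑(s.image M.row) := by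
    rw [Submodule.span_le]
    rintro _ ⟨i, rfl⟩
    by_cases hi : i ∈ s
    · exact Submodule.subset_span (mem_image_of_mem _ hi)
    · simp [row, hs i hi]
  rw [rank_eq_finrank_span_row]
  exact (Submodule.finrank_mono hspan).trans
    ((finrank_span_finset_le_card _).trans card_image_le)

theorem rank_le_card_mul_of_row_eq_zero {ι κ : Type*} [Fintype ι] [Fintype κ]
    (M : Matrix (ι × κ) n K) (s : Finset ι) (hs : ∀ i ∉ s, ∀ k, M (i, k) = 0) :
    M.rank ≤ #s * Fintype.card κ := by
  classical
  simpa using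
    M.rank_le_card_of_row_eq_zero (s ×ˢ univ) fun p hp => hs p.1 (by simpa using hp) p.2

end Matrix

theorem mem_filter_dist_le_union_of_cross {X : Type*} [PseudoMetricSpace X] [DecidableEq X]
    {Q₁ Q₂ : Finset X} {R : ℝ} {x y : X} (hx : x ∈ Q₁ ∪ Q₂) (hy : y ∈ Q₁ ∪ Q₂)
    (hcross : ¬((x ∈ Q₁ ∧ y ∈ Q₁) ∨ (x ∈ Q₂ ∧ y ∈ Q₂))) (hxy : dist x y ≤ R) :
    y ∈ Q₁.filter (fun z => ∃ w ∈ Q₂, dist z w ≤ R) ∪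
      Q₂.filter (fun z => ∃ w ∈ Q₁, dist z w ≤ R) := by
  rw [dist_comm] at hxy
  simp only [mem_union, mem_filter] at hx hy ⊢
  rcases hx with hx | hx <;> rcases hy with hy | hy
  · exact absurd (Or.inl ⟨hx, hy⟩) hcross
  · exact Or.inr ⟨hy, x, hx, hxy⟩
  · exact Or.inl ⟨hy, x, hx, hxy⟩
  · exact absurd (Or.inr ⟨hx, hy⟩) hcross

theorem stmt3_general {d n : ℕ} (R : ℝ) (Q Q₁ Q₂ : Finset (Fin d → ℤ))
    (hpart : Q₁ ∪ Q₂ = Q)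
    (H H' : Matrix (Q × Fin n) (Q × Fin n) ℂ)
    (hrange : ∀ x y : Q, R < dist (x : Fin d → ℤ) (y : Fin d → ℤ) →
      ∀ a b : Fin n, H (y, a) (x, b) = 0)
    (hH' : ∀ (x y : Q) (a b : Fin n),
      H' (y, a) (x, b) =
        if ((x : Fin d → ℤ) ∈ Q₁ ∧ (y : Fin d → ℤ) ∈ Q₁) ∨
           ((x : Fin d → ℤ) ∈ Q₂ ∧ (y : Fin d → ℤ) ∈ Q₂)
        then H (y, a) (x, b) else 0) :
    (H - H').rank ≤
      2 * n * (Q₁.filter (fun x => ∃ y ∈ Q₂, dist x y ≤ R)).card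
        + 2 * n * (Q₂.filter (fun x => ∃ y ∈ Q₁, dist x y ≤ R)).card := by
  classical
  set B₁ := Q₁.filter (fun x => ∃ y ∈ Q₂, dist x y ≤ R)
  set B₂ := Q₂.filter (fun x => ∃ y ∈ Q₁, dist x y ≤ R)
  have hrows : ∀ y ∉ (B₁ ∪ B₂).subtype (· ∈ Q), ∀ a : Fin n, (H - H') (y, a) = 0 := by
    intro y hy a
    ext ⟨x, b⟩
    rw [Matrix.sub_apply, hH']
    split_ifs with hsame
    · exact sub_self _
    · refine (sub_zero _).trans (hrange x y ?_ a b)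
      by_contra! hle
      exact hy (mem_subtype.2 <|
        mem_filter_dist_le_union_of_cross (hpart ▸ x.2) (hpart ▸ y.2) hsame hle)
  calc (H - H').rank ≤ #((B₁ ∪ B₂).subtype (· ∈ Q)) * n := by
        simpa using (H - H').rank_le_card_mul_of_row_eq_zero _ hrows
    _ ≤ (#B₁ + #B₂) * n := Nat.mul_le_mul_right _
        ((card_subtype _ _).trans_le ((card_filter_le _ _).trans (card_union_le _ _)))
    _ ≤ 2 * n * #B₁ + 2 * n * #B₂ := by nlinarith

/-- Rank estimate for the off-diagonal part of a finite-range block operator.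
`H` is a Hermitian block matrix on `⊕_{x ∈ Q} ℋ` with `ℋ = ℂ^n`, `Q = Q₁ ∪ Q₂` a
disjoint partition, and `H'` the block-diagonal part of `H` with respect to this
partition. If `H` has hopping range `R`, then the rank of `H - H'` is bounded by
`2 n` times the number of points of `Q₁` within distance `R` of `Q₂`, plus
`2 n` times the number of points of `Q₂` within distance `R` of `Q₁`. -/
theorem stmt3 {d n : ℕ} (R : ℝ) (Q Q₁ Q₂ : Finset (Fin d → ℤ))
    (hpart : Q₁ ∪ Q₂ = Q) (hdisj : Disjoint Q₁ Q₂)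
    (H H' : Matrix (Q × Fin n) (Q × Fin n) ℂ) (hH : H.IsHermitian)
    (hrange : ∀ x y : Q, R < dist (x : Fin d → ℤ) (y : Fin d → ℤ) →
      ∀ a b : Fin n, H (y, a) (x, b) = 0)
    (hH' : ∀ (x y : Q) (a b : Fin n),
      H' (y, a) (x, b) =
        if ((x : Fin d → ℤ) ∈ Q₁ ∧ (y : Fin d → ℤ) ∈ Q₁) ∨
           ((x : Fin d → ℤ) ∈ Q₂ ∧ (y : Fin d → ℤ) ∈ Q₂)
        then H (y, a) (x, b) else 0) :
    (H - H').rank ≤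
      2 * n * (Q₁.filter (fun x => ∃ y ∈ Q₂, dist x y ≤ R)).card
        + 2 * n * (Q₂.filter (fun x => ∃ y ∈ Q₁, dist x y ≤ R)).card :=
  stmt3_general R Q Q₁ Q₂ hpart H H' hrange hH'
end

section
/- The set of visible points in ℤ^d (d ≥ 2) has arbitrarily large holes: for every R > 0 there exists x ∈ ℤ^d such that no point y with |y - x|_∞ ≤ R is visible, i.e. every y in the cube of side 2R+1 around x has gcd(y₁,…,y_d) > 1. -/
open Finset

/-- Chinese remainder theorem over ℤ for a finite family of pairwise coprime moduli. -/
lemma crt_int {α : Type*} (s : Finset α) (m a : α → ℤ)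
    (hcop : ∀ z ∈ s, ∀ w ∈ s, z ≠ w → IsCoprime (m z) (m w)) :
    ∃ x : ℤ, ∀ z ∈ s, m z ∣ x - a z := by
  classical
  induction s using Finset.cons_induction with
  | empty => exact ⟨0, by simp⟩
  | cons z s hz ih =>
    obtain ⟨x, hx⟩ := ih (fun u hu v hv huv =>
      hcop u (Finset.mem_cons_of_mem hu) v (Finset.mem_cons_of_mem hv) huv)
    have hco : IsCoprime (m z) (∏ w ∈ s, m w) := by
      apply IsCoprime.prod_right
      intro w hw
      exact hcop z (Finset.mem_cons_self _ _) w (Finset.mem_cons_of_mem hw)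
        (by rintro rfl; exact hz hw)
    obtain ⟨u, v, huv⟩ := hco
    set P := ∏ w ∈ s, m w with hP
    refine ⟨a z * v * P + x * (u * m z), ?_⟩
    intro w hw
    rcases Finset.mem_cons.mp hw with rfl | hw
    · have key : a w * v * P + x * (u * m w) - a w = (x - a w) * u * m w := by
        linear_combination a w * huv
      rw [key]
      exact dvd_mul_left _ _
    · have hmP : m w ∣ P := Finset.dvd_prod_of_mem m hw
      have key : a z * v * P + x * (u * m z) - a w
          = (x - a w) + (a z - x) * v * P := by
        linear_combination x * huv
      rw [key]
      exact dvd_add (hx w hw) (Dvd.dvd.mul_left hmP _)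

/-- The set of visible points of `ℤ^d` (`d ≥ 2`) has arbitrarily large holes: for
every `R > 0` there is an `x ∈ ℤ^d` such that every point `y` with `|y - x|_∞ ≤ R`
is invisible, i.e. `y ≠ 0` and the gcd of the coordinates of `y` exceeds `1`. -/
theorem stmt7 {d : ℕ} (hd : 2 ≤ d) (R : ℝ) (hR : 0 < R) :
    ∃ x : Fin d → ℤ, ∀ y : Fin d → ℤ,
      (∀ i, |(y i : ℝ) - (x i : ℝ)| ≤ R) →
      y ≠ 0 ∧ 1 < Finset.univ.gcd y := by
  classical
  obtain ⟨e, he⟩ := (inferInstance : Countable (Fin d → ℤ)).exists_injective_nat'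
  set N : ℤ := ⌈R⌉ with hN
  have hNR : R ≤ (N : ℝ) := Int.le_ceil R
  set S : Finset (Fin d → ℤ) := Fintype.piFinset fun _ : Fin d => Finset.Icc (-N) N with hS
  set p : (Fin d → ℤ) → ℕ := fun z => Nat.nth Nat.Prime (e z) with hp
  have hprime : ∀ z, (p z).Prime := fun z => Nat.prime_nth_prime (e z)
  have hpinj : Function.Injective p :=
    fun z w h => he ((Nat.nth_injective Nat.infinite_setOf_prime) h)
  have hcop : ∀ z ∈ S, ∀ w ∈ S, z ≠ w →
      IsCoprime ((p z : ℤ)) ((p w : ℤ)) := by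
    intro z _ w _ hzw
    rw [Nat.isCoprime_iff_coprime]
    exact (Nat.coprime_primes (hprime z) (hprime w)).mpr fun h => hzw (hpinj h)
  have hx : ∀ i : Fin d, ∃ xi : ℤ, ∀ z ∈ S, ((p z : ℤ)) ∣ xi - (-(z i)) := fun i =>
    crt_int S (fun z => (p z : ℤ)) (fun z => -(z i)) hcop
  choose x hx using hx
  set M : ℤ := ∏ z ∈ S, (p z : ℤ) with hM
  have hM1 : 1 ≤ M := by
    have : 0 < M := Finset.prod_pos fun z _ => by exact_mod_cast (hprime z).pos
    omega
  have hdvdM : ∀ z ∈ S, (p z : ℤ) ∣ M := fun z hz =>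
    Finset.dvd_prod_of_mem _ hz
  have hd0 : 0 < d := by omega
  set i0 : Fin d := ⟨0, hd0⟩ with hi0
  set k : ℤ := max (N - x i0 + 1) 0 with hk
  set X : Fin d → ℤ := fun i => x i + (if i = i0 then k * M else 0) with hX
  have hXbig : N < X i0 := by
    have hk0 : 0 ≤ k := le_max_right _ _
    have hkM : k ≤ k * M := le_mul_of_one_le_right hk0 hM1
    have h1 : N - x i0 + 1 ≤ k := le_max_left _ _
    have hXi : X i0 = x i0 + k * M := by simp [hX]
    omega
  refine ⟨X, fun y hy => ?_⟩
  set z : Fin d → ℤ := fun i => y i - X i with hz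
  have hzS : z ∈ S := by
    rw [hS, Fintype.mem_piFinset]
    intro i
    rw [Finset.mem_Icc]
    have h1 : |(z i : ℝ)| ≤ (N : ℝ) := by
      have := hy i
      rw [hz]
      push_cast
      exact this.trans hNR
    rw [← Int.cast_abs, Int.cast_le] at h1
    constructor <;> [exact neg_le_of_abs_le h1; exact le_of_abs_le h1]
  have hdvdy : ∀ i, (p z : ℤ) ∣ y i := by
    intro i
    have h1 : (p z : ℤ) ∣ x i + z i := by
      have := hx i z hzS
      simpa [sub_neg_eq_add] using this
    have h2 : (p z : ℤ) ∣ (if i = i0 then k * M else 0) := by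
      split
      · exact (hdvdM z hzS).mul_left k
      · exact dvd_zero _
    have : y i = (x i + z i) + (if i = i0 then k * M else 0) := by
      rw [hz, hX]; ring
    rw [this]
    exact dvd_add h1 h2
  have hzlow : -N ≤ z i0 := by
    have := (Finset.mem_Icc.mp ((Fintype.mem_piFinset.mp hzS) i0)).1
    exact this
  have hy0 : 0 < y i0 := by
    have : y i0 = X i0 + z i0 := by rw [hz]; ring
    omega
  have hyne : y ≠ 0 := fun h => by simp [h] at hy0
  refine ⟨hyne, ?_⟩
  set g : ℤ := Finset.univ.gcd y with hg
  have hpg : (p z : ℤ) ∣ g := Finset.dvd_gcd fun i _ => hdvdy i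
  have hgdvd : g ∣ y i0 := Finset.gcd_dvd (Finset.mem_univ i0)
  have hgne : g ≠ 0 := fun h => by
    rw [h] at hgdvd
    exact absurd (zero_dvd_iff.mp hgdvd) (by omega)
  have hgnn : 0 ≤ g := by
    rw [hg, ← Finset.normalize_gcd, ← Int.abs_eq_normalize]
    exact abs_nonneg _
  have hgpos : 0 < g := lt_of_le_of_ne hgnn (Ne.symm hgne)
  have h2p : (2 : ℤ) ≤ (p z : ℤ) := by exact_mod_cast (hprime z).two_le
  have : (p z : ℤ) ≤ g := Int.le_of_dvd hgpos hpg
  omega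
end
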